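/- arXiv:0901.4735 — 4 statements merged into one kernel-verified Lean document; each statement's English description precedes it below -/
import Mathlib

section
/- For all j, l ∈ {1,…,ℓ−1} and i ∈ Λ_k: δ_{j#i,+1}·δ_{l#(i^{j,+}),−1} − δ_{l#i,−1}·δ_{j#(i^{l,−}),+1} = δ_{j,l}·(j#i). In particular the operators E_j, F_l defined on W_k = ℂ^{Λ_k} by (E_j w)_i = δ_{j#i,+1} w_{i^{j,+}}, (F_l w)_i = δ_{l#i,−1} w_{i^{l,−}} satisfy [E_j, F_l] = δ_{j,l}·H_j where (H_j w)_i = (j#i)·w_i. -/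
/-- `j#s` for a subset `s` (equivalently, a strictly increasing tuple). -/
def sharpS (j : ℕ) (s : Finset ℕ) : ℤ :=
  (if j ∈ s then (1 : ℤ) else 0) - (if j + 1 ∈ s then 1 else 0)

/-- `s^{j,+}`: replace the entry `j` of `s` by `j+1`. -/
def upJ (j : ℕ) (s : Finset ℕ) : Finset ℕ := insert (j + 1) (s.erase j)

/-- `s^{j,-}`: replace the entry `j+1` of `s` by `j`. -/
def downJ (j : ℕ) (s : Finset ℕ) : Finset ℕ := insert j (s.erase (j + 1))

/-- The operator `E_j` on `W_k`: `(E_j w)_i = δ_{j#i,+1} w_{i^{j,+}}`. -/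
def Eop (j : ℕ) (w : Finset ℕ → ℂ) : Finset ℕ → ℂ :=
  fun s => if sharpS j s = 1 then w (upJ j s) else 0

/-- The operator `F_l` on `W_k`: `(F_l w)_i = δ_{l#i,-1} w_{i^{l,-}}`. -/
def Fop (l : ℕ) (w : Finset ℕ → ℂ) : Finset ℕ → ℂ :=
  fun s => if sharpS l s = -1 then w (downJ l s) else 0

/-! Only the entries `j`, `j + 1` of `s` matter for `E_j`, `F_j`: `(E_j F_j w)_s` is `w_s` when
`j#s = 1` and `0` otherwise, `(F_j E_j w)_s` is `w_s` when `j#s = -1` and `0` otherwise, so the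
commutator is multiplication by `j#s`.
For `j ≠ l` the moves `j → j + 1` and `l + 1 → l` commute, and one order is admissible iff the
other is, so `E_j` and `F_l` commute. The delta identity is the commutator evaluated at `w = 1`. -/

lemma sharpS_eq_one_iff {j : ℕ} {s : Finset ℕ} : sharpS j s = 1 ↔ j ∈ s ∧ j + 1 ∉ s := by
  unfold sharpS; split_ifs <;> simp_all

lemma sharpS_eq_neg_one_iff {j : ℕ} {s : Finset ℕ} : sharpS j s = -1 ↔ j ∉ s ∧ j + 1 ∈ s := by
  unfold sharpS; split_ifs <;> simp_all

lemma sharpS_trichotomy (j : ℕ) (s : Finset ℕ) :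
    sharpS j s = 1 ∨ sharpS j s = 0 ∨ sharpS j s = -1 := by
  unfold sharpS; split_ifs <;> simp

lemma mem_upJ {x j : ℕ} {s : Finset ℕ} : x ∈ upJ j s ↔ x = j + 1 ∨ x ∈ s ∧ x ≠ j := by
  simp only [upJ, Finset.mem_insert, Finset.mem_erase]; tauto

lemma mem_downJ {x j : ℕ} {s : Finset ℕ} : x ∈ downJ j s ↔ x = j ∨ x ∈ s ∧ x ≠ j + 1 := by
  simp only [downJ, Finset.mem_insert, Finset.mem_erase]; tauto

lemma sharpS_upJ_self (j : ℕ) (s : Finset ℕ) : sharpS j (upJ j s) = -1 :=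
  sharpS_eq_neg_one_iff.2 ⟨by simp [mem_upJ], by simp [mem_upJ]⟩

lemma sharpS_downJ_self (j : ℕ) (s : Finset ℕ) : sharpS j (downJ j s) = 1 :=
  sharpS_eq_one_iff.2 ⟨by simp [mem_downJ], by simp [mem_downJ]⟩

lemma downJ_upJ_self {j : ℕ} {s : Finset ℕ} (h : sharpS j s = 1) : downJ j (upJ j s) = s := by
  obtain ⟨hj, hj1⟩ := sharpS_eq_one_iff.1 h
  ext x; simp only [mem_downJ, mem_upJ]
  grind

lemma upJ_downJ_self {j : ℕ} {s : Finset ℕ} (h : sharpS j s = -1) : upJ j (downJ j s) = s := by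
  obtain ⟨hj, hj1⟩ := sharpS_eq_neg_one_iff.1 h
  ext x; simp only [mem_downJ, mem_upJ]
  grind

lemma downJ_upJ_comm {j l : ℕ} (s : Finset ℕ) (hjl : j ≠ l) (hlj : l + 1 ≠ j) :
    downJ l (upJ j s) = upJ j (downJ l s) := by
  ext x; simp only [mem_downJ, mem_upJ]
  by_cases hx : x ∈ s <;> simp [hx] <;> omega

lemma Eop_Fop_apply (j l : ℕ) (w : Finset ℕ → ℂ) (s : Finset ℕ) :
    Eop j (Fop l w) s =
      if sharpS j s = 1 ∧ sharpS l (upJ j s) = -1 then w (downJ l (upJ j s)) else 0 := by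
  simp only [Eop, Fop, ite_and]

lemma Fop_Eop_apply (j l : ℕ) (w : Finset ℕ → ℂ) (s : Finset ℕ) :
    Fop l (Eop j w) s =
      if sharpS l s = -1 ∧ sharpS j (downJ l s) = 1 then w (upJ j (downJ l s)) else 0 := by
  simp only [Eop, Fop, ite_and]

lemma Eop_Fop_self_apply (j : ℕ) (w : Finset ℕ → ℂ) (s : Finset ℕ) :
    Eop j (Fop j w) s = if sharpS j s = 1 then w s else 0 := by
  rw [Eop_Fop_apply]
  split_ifs <;> simp_all [sharpS_upJ_self, downJ_upJ_self]

lemma Fop_Eop_self_apply (j : ℕ) (w : Finset ℕ → ℂ) (s : Finset ℕ) :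
    Fop j (Eop j w) s = if sharpS j s = -1 then w s else 0 := by
  rw [Fop_Eop_apply]
  split_ifs <;> simp_all [sharpS_downJ_self, upJ_downJ_self]

lemma Eop_Fop_sub_Fop_Eop_self (j : ℕ) (w : Finset ℕ → ℂ) (s : Finset ℕ) :
    Eop j (Fop j w) s - Fop j (Eop j w) s = sharpS j s * w s := by
  rw [Eop_Fop_self_apply, Fop_Eop_self_apply]
  rcases sharpS_trichotomy j s with h | h | h <;> simp [h]

lemma sharpS_upJ_and_iff_sharpS_downJ_and {j l : ℕ} (hjl : j ≠ l) (s : Finset ℕ) :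
    (sharpS j s = 1 ∧ sharpS l (upJ j s) = -1) ↔ (sharpS l s = -1 ∧ sharpS j (downJ l s) = 1) := by
  simp only [sharpS_eq_one_iff, sharpS_eq_neg_one_iff, mem_upJ, mem_downJ]
  grind

lemma Eop_Fop_comm_of_ne {j l : ℕ} (hjl : j ≠ l) (w : Finset ℕ → ℂ) (s : Finset ℕ) :
    Eop j (Fop l w) s = Fop l (Eop j w) s := by
  rw [Eop_Fop_apply, Fop_Eop_apply, if_congr (sharpS_upJ_and_iff_sharpS_downJ_and hjl s) rfl rfl]
  split_ifs with h
  · have hlj : l + 1 ≠ j := by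
      have h' := (sharpS_eq_neg_one_iff.1 ((sharpS_upJ_and_iff_sharpS_downJ_and hjl s).2 h).2).2
      rw [mem_upJ] at h'
      omega
    rw [downJ_upJ_comm s hjl hlj]
  · rfl

lemma Eop_Fop_commutator (j l : ℕ) (w : Finset ℕ → ℂ) (s : Finset ℕ) :
    Eop j (Fop l w) s - Fop l (Eop j w) s = if j = l then (sharpS j s : ℂ) * w s else 0 := by
  split_ifs with hjl
  · subst hjl; exact Eop_Fop_sub_Fop_Eop_self j w s
  · rw [Eop_Fop_comm_of_ne hjl, sub_self]

theorem delta_identity_and_commutator_general (j l : ℕ) (s : Finset ℕ) :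
    ((if sharpS j s = 1 then (if sharpS l (upJ j s) = -1 then (1 : ℤ) else 0) else 0)
      - (if sharpS l s = -1 then (if sharpS j (downJ l s) = 1 then 1 else 0) else 0)
      = (if j = l then 1 else 0) * sharpS j s) ∧
    (∀ w : Finset ℕ → ℂ,
      Eop j (Fop l w) s - Fop l (Eop j w) s
        = if j = l then ((sharpS j s : ℂ)) * w s else 0) := by
  refine ⟨?_, fun w => Eop_Fop_commutator j l w s⟩
  have h := Eop_Fop_commutator j l (fun _ => 1) s
  simp only [Eop, Fop, mul_one] at h
  rw [ite_mul, one_mul, zero_mul]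
  exact_mod_cast h

theorem delta_identity_and_commutator (ℓ k : ℕ) (hℓ : 2 ≤ ℓ) (hk1 : 1 ≤ k) (hkℓ : k ≤ ℓ)
    (j l : ℕ) (hj1 : 1 ≤ j) (hjℓ : j ≤ ℓ - 1) (hl1 : 1 ≤ l) (hlℓ : l ≤ ℓ - 1)
    (s : Finset ℕ) (hs : s ⊆ Finset.Icc 1 ℓ) (hcard : s.card = k) :
    ((if sharpS j s = 1 then (if sharpS l (upJ j s) = -1 then (1 : ℤ) else 0) else 0)
      - (if sharpS l s = -1 then (if sharpS j (downJ l s) = 1 then 1 else 0) else 0)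
      = (if j = l then 1 else 0) * sharpS j s) ∧
    (∀ w : Finset ℕ → ℂ,
      Eop j (Fop l w) s - Fop l (Eop j w) s
        = if j = l then ((sharpS j s : ℂ)) * w s else 0) :=
  delta_identity_and_commutator_general j l s
end

section
/- Define the q-deformed wedge product of v ∈ W_h and w ∈ W_k (spaces indexed by strictly increasing tuples) by (v ∧_q w)_i = Σ_{p ∈ S^{(h)}_{h+k}} (−q^{−1})^{‖p‖} v_{i_{p(1)},…,i_{p(h)}} w_{i_{p(h+1)},…,i_{p(h+k)}}, where the sum is over minimal coset representatives of S_h × S_k in S_{h+k} and ‖p‖ is the inversion number. Then ∧_q is associative: (u ∧_q v) ∧_q w = u ∧_q (v ∧_q w). -/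
/-- The inversion number `‖p‖` of a permutation of `Fin n`. -/
def invNum (n : ℕ) (p : Equiv.Perm (Fin n)) : ℕ :=
  ((Finset.univ : Finset (Fin n × Fin n)).filter
    (fun x => x.1 < x.2 ∧ p x.2 < p x.1)).card

/-- The set `S^{(h)}_{h+k}` of minimal coset representatives: permutations increasing on the
first block `{1,…,h}` and on the second block `{h+1,…,h+k}`. -/
def shuffles (h k : ℕ) : Finset (Equiv.Perm (Fin (h + k))) :=
  Finset.univ.filter (fun p =>
    (∀ a b : Fin h, a < b → p (Fin.castAdd k a) < p (Fin.castAdd k b)) ∧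
    (∀ a b : Fin k, a < b → p (Fin.natAdd h a) < p (Fin.natAdd h b)))

/-- The q-deformed wedge product
`(v ∧_q w)_i = Σ_{p ∈ S^{(h)}_{h+k}} (-q⁻¹)^{‖p‖} v_{i_{p(1)},…,i_{p(h)}} w_{i_{p(h+1)},…,i_{p(h+k)}}`. -/
noncomputable def wedgeQ (q : ℝ) (h k : ℕ)
    (v : (Fin h → ℕ) → ℂ) (w : (Fin k → ℕ) → ℂ) : (Fin (h + k) → ℕ) → ℂ :=
  fun i => ∑ p ∈ shuffles h k,
    ((-q⁻¹ : ℂ) ^ invNum (h + k) p)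
      * v (fun a => i (p (Fin.castAdd k a)))
      * w (fun a => i (p (Fin.natAdd h a)))

/-
Both sides equal the sum over the permutations of `Fin (h + k + m)` that increase on each of the
three blocks (the minimal coset representatives of `S_h × S_k × S_m`). Sorting each block shows
that every permutation of `Fin (a + b)` is uniquely a shuffle `p ∈ S^{(a)}_{a+b}` times a
block-diagonal permutation `s ⊕ t`, and `‖p (s ⊕ t)‖ = ‖p‖ + ‖s‖ + ‖t‖`, because `p` has no
inversions inside a block while `s ⊕ t` only permutes the pairs straddling the two blocks. Applied
to the splittings `(h + k | m), (h | k)` on the left and `(h | k + m), (k | m)` on the right, this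
turns both nested sums into the same triple sum.
-/

open Equiv Finset

lemma StrictMono.strictMono_comp_iff {α β γ : Type*} [LinearOrder α] [Preorder β]
    [Preorder γ] {f : α → β} (hf : StrictMono f) {g : γ → α} :
    StrictMono (f ∘ g) ↔ StrictMono g :=
  ⟨fun h _ _ hxy => hf.lt_iff_lt.mp (h hxy), hf.comp⟩

lemma Equiv.Perm.strictMono_iff {n : ℕ} (σ : Perm (Fin n)) : StrictMono σ ↔ σ = 1 :=
  ⟨fun h => (Perm.monotone_iff σ).mp h.monotone, fun h => h ▸ strictMono_id⟩

lemma invNum_eq_sum (n : ℕ) (p : Perm (Fin n)) :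
    invNum n p = ∑ x, ∑ y, if x < y ∧ p y < p x then 1 else 0 := by
  rw [invNum, Finset.card_filter, Fintype.sum_prod_type]

@[simp] lemma invNum_one (n : ℕ) : invNum n 1 = 0 := by
  rw [invNum, Finset.card_eq_zero, Finset.filter_eq_empty_iff]
  exact fun x _ hx => lt_asymm hx.1 hx.2

lemma invNum_permCongr_finCongr {n n' : ℕ} (hn : n = n') (p : Perm (Fin n)) :
    invNum n' ((finCongr hn).permCongr p) = invNum n p := by
  subst hn
  rfl

section Shuffles

variable {a b : ℕ}

lemma mem_shuffles {p : Perm (Fin (a + b))} :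
    p ∈ shuffles a b ↔ StrictMono (p ∘ Fin.castAdd b) ∧ StrictMono (p ∘ Fin.natAdd a) := by
  simp [shuffles, StrictMono]

def blockPerm (s : Perm (Fin a)) (t : Perm (Fin b)) : Perm (Fin (a + b)) :=
  finSumFinEquiv.permCongr (s.sumCongr t)

@[simp] lemma blockPerm_castAdd (s : Perm (Fin a)) (t : Perm (Fin b)) (x : Fin a) :
    blockPerm s t (Fin.castAdd b x) = Fin.castAdd b (s x) := by
  simp [blockPerm, permCongr_apply]

@[simp] lemma blockPerm_natAdd (s : Perm (Fin a)) (t : Perm (Fin b)) (y : Fin b) :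
    blockPerm s t (Fin.natAdd a y) = Fin.natAdd a (t y) := by
  simp [blockPerm, permCongr_apply]

lemma blockPerm_mul (s s' : Perm (Fin a)) (t t' : Perm (Fin b)) :
    blockPerm (s * s') (t * t') = blockPerm s t * blockPerm s' t' := by
  rw [blockPerm, blockPerm, blockPerm, ← permCongr_mul, Perm.sumCongr_mul]

@[simp] lemma blockPerm_one : blockPerm (1 : Perm (Fin a)) (1 : Perm (Fin b)) = 1 := by
  ext x
  refine Fin.addCases (fun x => ?_) (fun y => ?_) x <;> simp

lemma mul_blockPerm_comp_castAdd (p : Perm (Fin (a + b))) (s : Perm (Fin a))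
    (t : Perm (Fin b)) : ⇑(p * blockPerm s t) ∘ Fin.castAdd b = (p ∘ Fin.castAdd b) ∘ s := by
  ext x
  simp

lemma mul_blockPerm_comp_natAdd (p : Perm (Fin (a + b))) (s : Perm (Fin a))
    (t : Perm (Fin b)) : ⇑(p * blockPerm s t) ∘ Fin.natAdd a = (p ∘ Fin.natAdd a) ∘ t := by
  ext x
  simp

lemma invNum_mul_blockPerm {p : Perm (Fin (a + b))} (hp : p ∈ shuffles a b)
    (s : Perm (Fin a)) (t : Perm (Fin b)) :
    invNum (a + b) (p * blockPerm s t) = invNum (a + b) p + invNum a s + invNum b t := by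
  obtain ⟨hp₁, hp₂⟩ := mem_shuffles.mp hp
  have hp₁' : ∀ x y, p (Fin.castAdd b x) < p (Fin.castAdd b y) ↔ x < y :=
    fun x y => hp₁.lt_iff_lt
  have hp₂' : ∀ x y, p (Fin.natAdd a x) < p (Fin.natAdd a y) ↔ x < y :=
    fun x y => hp₂.lt_iff_lt
  have hcross : ∀ x y, Fin.castAdd b x < Fin.natAdd a y := fun x y => by
    simp only [Fin.lt_def, Fin.val_castAdd, Fin.val_natAdd]; omega
  have hcross' : ∀ x y, ¬ Fin.natAdd a y < Fin.castAdd b x := fun x y => lt_asymm (hcross x y)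
  suffices key : ∀ s t, invNum (a + b) (p * blockPerm s t) = invNum a s + invNum b t +
      ∑ x, ∑ y, if p (Fin.natAdd a y) < p (Fin.castAdd b x) then 1 else 0 by
    have h1 := key 1 1
    rw [blockPerm_one, mul_one, invNum_one, invNum_one, zero_add, zero_add] at h1
    rw [key, h1]
    ring
  intro s t
  have hreindex : (∑ x, ∑ y, if p (Fin.natAdd a (t y)) < p (Fin.castAdd b (s x)) then 1 else 0)
      = ∑ x, ∑ y, if p (Fin.natAdd a y) < p (Fin.castAdd b x) then 1 else 0 :=
    (Fintype.sum_congr _ _ fun x => Equiv.sum_comp t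
      (fun y => if p (Fin.natAdd a y) < p (Fin.castAdd b (s x)) then 1 else 0)).trans
    (Equiv.sum_comp s fun x => ∑ y, if p (Fin.natAdd a y) < p (Fin.castAdd b x) then 1 else 0)
  simp only [invNum_eq_sum, Fin.sum_univ_add, Perm.mul_apply, blockPerm_castAdd,
    blockPerm_natAdd, (Fin.strictMono_castAdd b).lt_iff_lt, (Fin.strictMono_natAdd a).lt_iff_lt,
    hp₁', hp₂', hcross, true_and, hcross', false_and, if_false]
  simp only [Finset.sum_add_distrib, Finset.sum_const_zero, zero_add, hreindex]
  ring

lemma exists_shuffle_mul_blockPerm_eq (r : Perm (Fin (a + b))) :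
    ∃ p ∈ shuffles a b, ∃ s t, p * blockPerm s t = r := by
  set σ := Tuple.sort (r ∘ Fin.castAdd b)
  set τ := Tuple.sort (r ∘ Fin.natAdd a)
  refine ⟨r * blockPerm σ τ, mem_shuffles.mpr ⟨?_, ?_⟩, σ⁻¹, τ⁻¹, ?_⟩
  · rw [mul_blockPerm_comp_castAdd]
    exact (Tuple.monotone_sort _).strictMono_of_injective
      ((r.injective.comp (Fin.castAdd_injective _ _)).comp σ.injective)
  · rw [mul_blockPerm_comp_natAdd]
    exact (Tuple.monotone_sort _).strictMono_of_injective
      ((r.injective.comp (Fin.natAdd_injective _ _)).comp τ.injective)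
  · rw [mul_assoc, ← blockPerm_mul, mul_inv_cancel, mul_inv_cancel, blockPerm_one, mul_one]

lemma shuffle_mul_blockPerm_inj {p p' : Perm (Fin (a + b))} (hp : p ∈ shuffles a b)
    (hp' : p' ∈ shuffles a b) {s s' : Perm (Fin a)} {t t' : Perm (Fin b)}
    (h : p * blockPerm s t = p' * blockPerm s' t') : p = p' ∧ s = s' ∧ t = t' := by
  obtain ⟨hp₁, hp₂⟩ := mem_shuffles.mp hp
  obtain ⟨hp₁', hp₂'⟩ := mem_shuffles.mp hp'
  have hpp : p = p' * blockPerm (s' * s⁻¹) (t' * t⁻¹) := by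
    rw [blockPerm_mul, ← mul_assoc, ← h, mul_assoc, ← blockPerm_mul, mul_inv_cancel,
      mul_inv_cancel, blockPerm_one, mul_one]
  rw [hpp, mul_blockPerm_comp_castAdd, hp₁'.strictMono_comp_iff, Perm.strictMono_iff,
    mul_inv_eq_one] at hp₁
  rw [hpp, mul_blockPerm_comp_natAdd, hp₂'.strictMono_comp_iff, Perm.strictMono_iff,
    mul_inv_eq_one] at hp₂
  subst hp₁ hp₂
  exact ⟨mul_right_cancel h, rfl, rfl⟩

end Shuffles

section ThreeBlocks

variable {h k m : ℕ}

@[simp] lemma cast_castAdd_castAdd (a : Fin h) :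
    Fin.cast (add_assoc h k m) (Fin.castAdd m (Fin.castAdd k a)) = Fin.castAdd (k + m) a :=
  rfl

@[simp] lemma cast_castAdd_natAdd (a : Fin k) :
    Fin.cast (add_assoc h k m) (Fin.castAdd m (Fin.natAdd h a)) = Fin.natAdd h (Fin.castAdd m a) :=
  rfl

@[simp] lemma cast_natAdd_natAdd (a : Fin m) :
    Fin.cast (add_assoc h k m) (Fin.natAdd (h + k) a) = Fin.natAdd h (Fin.natAdd k a) :=
  Fin.ext (add_assoc h k a)

def shuffles₃ (h k m : ℕ) : Finset (Perm (Fin (h + k + m))) :=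
  univ.filter fun r => StrictMono (r ∘ Fin.castAdd m ∘ Fin.castAdd k) ∧
    StrictMono (r ∘ Fin.castAdd m ∘ Fin.natAdd h) ∧ StrictMono (r ∘ Fin.natAdd (h + k))

lemma mem_shuffles₃ {r : Perm (Fin (h + k + m))} :
    r ∈ shuffles₃ h k m ↔ StrictMono (r ∘ Fin.castAdd m ∘ Fin.castAdd k) ∧
      StrictMono (r ∘ Fin.castAdd m ∘ Fin.natAdd h) ∧ StrictMono (r ∘ Fin.natAdd (h + k)) := by
  simp [shuffles₃]

lemma mul_blockPerm_mem_shuffles₃_iff {p : Perm (Fin (h + k + m))} (hp : p ∈ shuffles (h + k) m)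
    (s : Perm (Fin (h + k))) (t : Perm (Fin m)) :
    p * blockPerm s t ∈ shuffles₃ h k m ↔ s ∈ shuffles h k ∧ t = 1 := by
  obtain ⟨hp₁, hp₂⟩ := mem_shuffles.mp hp
  have e₁ : ⇑(p * blockPerm s t) ∘ Fin.castAdd m ∘ Fin.castAdd k
      = (p ∘ Fin.castAdd m) ∘ (s ∘ Fin.castAdd k) := by
    ext x; simp
  have e₂ : ⇑(p * blockPerm s t) ∘ Fin.castAdd m ∘ Fin.natAdd h
      = (p ∘ Fin.castAdd m) ∘ (s ∘ Fin.natAdd h) := by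
    ext x; simp
  rw [mem_shuffles₃, mem_shuffles, e₁, e₂, mul_blockPerm_comp_natAdd, hp₁.strictMono_comp_iff,
    hp₁.strictMono_comp_iff, hp₂.strictMono_comp_iff, Perm.strictMono_iff, and_assoc]

lemma permCongr_mul_blockPerm_mem_shuffles₃_iff {p : Perm (Fin (h + (k + m)))}
    (hp : p ∈ shuffles h (k + m)) (s : Perm (Fin h)) (t : Perm (Fin (k + m))) :
    (finCongr (add_assoc h k m)).symm.permCongr (p * blockPerm s t) ∈ shuffles₃ h k m ↔
      s = 1 ∧ t ∈ shuffles k m := by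
  obtain ⟨hp₁, hp₂⟩ := mem_shuffles.mp hp
  set r := (finCongr (add_assoc h k m)).symm.permCongr (p * blockPerm s t) with hr
  have hcast : StrictMono (Fin.cast (add_assoc h k m).symm) := fun _ _ => id
  have e₁ : ⇑r ∘ Fin.castAdd m ∘ Fin.castAdd k
      = Fin.cast (add_assoc h k m).symm ∘ (p ∘ Fin.castAdd (k + m)) ∘ s := by
    ext x; simp [hr, permCongr_apply]
  have e₂ : ⇑r ∘ Fin.castAdd m ∘ Fin.natAdd h
      = Fin.cast (add_assoc h k m).symm ∘ (p ∘ Fin.natAdd h) ∘ (t ∘ Fin.castAdd m) := by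
    ext x; simp [hr, permCongr_apply]
  have e₃ : ⇑r ∘ Fin.natAdd (h + k)
      = Fin.cast (add_assoc h k m).symm ∘ (p ∘ Fin.natAdd h) ∘ (t ∘ Fin.natAdd k) := by
    ext x; simp [hr, permCongr_apply]
  rw [mem_shuffles₃, mem_shuffles, e₁, e₂, e₃, hcast.strictMono_comp_iff,
    hcast.strictMono_comp_iff, hcast.strictMono_comp_iff, hp₁.strictMono_comp_iff,
    hp₂.strictMono_comp_iff, hp₂.strictMono_comp_iff, Perm.strictMono_iff]

noncomputable def wedgeQ₃ (q : ℝ) (h k m : ℕ) (u : (Fin h → ℕ) → ℂ) (v : (Fin k → ℕ) → ℂ)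
    (w : (Fin m → ℕ) → ℂ) : (Fin (h + k + m) → ℕ) → ℂ :=
  fun i => ∑ r ∈ shuffles₃ h k m, (-q⁻¹ : ℂ) ^ invNum (h + k + m) r
    * u (fun a => i (r (Fin.castAdd m (Fin.castAdd k a))))
    * v (fun a => i (r (Fin.castAdd m (Fin.natAdd h a))))
    * w (fun a => i (r (Fin.natAdd (h + k) a)))

end ThreeBlocks

section Expansion

variable (q : ℝ) {h k m : ℕ} (u : (Fin h → ℕ) → ℂ) (v : (Fin k → ℕ) → ℂ) (w : (Fin m → ℕ) → ℂ)

lemma wedgeQ_wedgeQ_left (i : Fin (h + k + m) → ℕ) :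
    wedgeQ q (h + k) m (wedgeQ q h k u v) w i = wedgeQ₃ q h k m u v w i := by
  simp only [wedgeQ, wedgeQ₃, Finset.mul_sum, Finset.sum_mul]
  rw [← Finset.sum_product']
  refine Finset.sum_nbij (fun x => x.1 * blockPerm x.2 1) ?_ ?_ ?_ ?_
  · rintro ⟨p, s⟩ hps
    obtain ⟨hp, hs⟩ := Finset.mem_product.mp hps
    exact (mul_blockPerm_mem_shuffles₃_iff hp s 1).mpr ⟨hs, rfl⟩
  · rintro ⟨p, s⟩ hps ⟨p', s'⟩ hps' heq
    obtain ⟨hpp, hss, -⟩ :=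
      shuffle_mul_blockPerm_inj (Finset.mem_product.mp hps).1 (Finset.mem_product.mp hps').1 heq
    exact Prod.ext hpp hss
  · intro r hr
    obtain ⟨p, hp, s, t, rfl⟩ := exists_shuffle_mul_blockPerm_eq r
    obtain ⟨hs, rfl⟩ := (mul_blockPerm_mem_shuffles₃_iff hp s t).mp hr
    exact ⟨(p, s), Finset.mem_product.mpr ⟨hp, hs⟩, rfl⟩
  · rintro ⟨p, s⟩ hps
    simp only [Perm.mul_apply, blockPerm_castAdd, blockPerm_natAdd, Perm.one_apply,
      invNum_mul_blockPerm (Finset.mem_product.mp hps).1, invNum_one, add_zero, pow_add]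
    ring

lemma wedgeQ_wedgeQ_right (i : Fin (h + k + m) → ℕ) :
    wedgeQ q h (k + m) u (wedgeQ q k m v w) (fun a => i (Fin.cast (add_assoc h k m).symm a))
      = wedgeQ₃ q h k m u v w i := by
  simp only [wedgeQ, wedgeQ₃, Finset.mul_sum]
  rw [← Finset.sum_product']
  refine Finset.sum_nbij
    (fun x => (finCongr (add_assoc h k m)).symm.permCongr (x.1 * blockPerm 1 x.2)) ?_ ?_ ?_ ?_
  · rintro ⟨p, t⟩ hpt
    obtain ⟨hp, ht⟩ := Finset.mem_product.mp hpt
    exact (permCongr_mul_blockPerm_mem_shuffles₃_iff hp 1 t).mpr ⟨rfl, ht⟩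
  · rintro ⟨p, t⟩ hpt ⟨p', t'⟩ hpt' heq
    obtain ⟨hpp, -, htt⟩ := shuffle_mul_blockPerm_inj (Finset.mem_product.mp hpt).1
      (Finset.mem_product.mp hpt').1 ((permCongr _).injective heq)
    exact Prod.ext hpp htt
  · intro r hr
    obtain ⟨p, hp, s, t, hr'⟩ :=
      exists_shuffle_mul_blockPerm_eq ((finCongr (add_assoc h k m)).permCongr r)
    have hr'' : (finCongr (add_assoc h k m)).symm.permCongr (p * blockPerm s t) = r := by
      rw [hr', ← permCongr_symm, Equiv.symm_apply_apply]
    rw [← hr''] at hr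
    obtain ⟨rfl, ht⟩ := (permCongr_mul_blockPerm_mem_shuffles₃_iff hp s t).mp hr
    exact ⟨(p, t), Finset.mem_product.mpr ⟨hp, ht⟩, hr''⟩
  · rintro ⟨p, t⟩ hpt
    simp only [permCongr_apply, Perm.mul_apply, finCongr_symm, invNum_permCongr_finCongr,
      invNum_mul_blockPerm (Finset.mem_product.mp hpt).1, invNum_one, finCongr_apply,
      cast_castAdd_castAdd, cast_castAdd_natAdd, cast_natAdd_natAdd, blockPerm_castAdd,
      blockPerm_natAdd, Perm.one_apply, pow_add]
    ring

end Expansion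

theorem wedgeQ_assoc_general (q : ℝ)
    (h k m : ℕ)
    (u : (Fin h → ℕ) → ℂ) (v : (Fin k → ℕ) → ℂ) (w : (Fin m → ℕ) → ℂ)
    (i : Fin (h + k + m) → ℕ) :
    wedgeQ q (h + k) m (wedgeQ q h k u v) w i
      = wedgeQ q h (k + m) u (wedgeQ q k m v w)
          (fun a => i (Fin.cast (add_assoc h k m).symm a)) := by
  rw [wedgeQ_wedgeQ_left, wedgeQ_wedgeQ_right]

theorem wedgeQ_assoc (q : ℝ) (hq0 : 0 < q) (hq1 : q < 1) (ℓ : ℕ) (hℓ : 2 ≤ ℓ)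
    (h k m : ℕ)
    (u : (Fin h → ℕ) → ℂ) (v : (Fin k → ℕ) → ℂ) (w : (Fin m → ℕ) → ℂ)
    (i : Fin (h + k + m) → ℕ) (hmono : StrictMono i)
    (hbd : ∀ a, 1 ≤ i a ∧ i a ≤ ℓ) :
    wedgeQ q (h + k) m (wedgeQ q h k u v) w i
      = wedgeQ q h (k + m) u (wedgeQ q k m v w)
          (fun a => i (Fin.cast (add_assoc h k m).symm a)) :=
  wedgeQ_assoc_general q h k m u v w i
end

section
/- Let n = (n₁, 0, …, 0, n_ℓ) + e_k ∈ ℕ^ℓ (i.e. n_i = n₁δ_{i,1} + n_ℓδ_{i,ℓ} + δ_{i,k}) for some 1 ≤ k ≤ ℓ. Then the Weyl dimension formula dim V_n = Π_{1≤r≤s≤ℓ}(s−r+1+Σ_{i=r}^s n_i) / Π_{r=1}^ℓ r! evaluates to dim V_n = [k(n₁+n_ℓ+ℓ+1)/((n₁+k)(n_ℓ+ℓ+1−k))] · C(n₁+ℓ, ℓ) · C(n_ℓ+ℓ, ℓ) · C(ℓ, k), where C(·,·) are binomial coefficients. -/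
/-!
Put `x_j = ∑_{i ≤ j} (n_i + 1)`, so that `x_0 = 0`. The Weyl factor of `(r, s)` is
`x_s - x_{r-1}`, so the numerator is the Vandermonde product `∏_{a < b} (b - a)` of the points
`x_0 < ⋯ < x_ℓ`; for this highest weight they are `0`, `n₁ + ({1, …, ℓ} \ {k})` and
`N = n₁ + nℓ + ℓ + 1`. Adding a point to a set multiplies its Vandermonde product by the
distances from that point to the others. So the numerator is `N`, times the products of the
distances from `0` and from `N` to the middle points, `(n₁ + ℓ)! / (n₁! (n₁ + k))` and
`(nℓ + ℓ)! / (nℓ! (nℓ + ℓ + 1 - k))`, times the Vandermonde product of `{1, …, ℓ} \ {k}`, which is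
that of `{1, …, ℓ}`, namely `∏_{r < ℓ} r!`, divided by the distances `(k - 1)! (ℓ - k)!` to `k`.
-/

open Finset Nat

def vandermondeProd (S : Finset ℕ) : ℕ := ∏ a ∈ S, ∏ b ∈ S with a < b, (b - a)

theorem vandermondeProd_insert {S : Finset ℕ} {c : ℕ} (hc : c ∉ S) :
    vandermondeProd (insert c S) =
      vandermondeProd S * (∏ b ∈ S with b < c, (c - b)) * ∏ b ∈ S with c < b, (b - c) := by
  have hrow : ∀ a ∈ S, ∏ b ∈ insert c S with a < b, (b - a) =
      (if a < c then c - a else 1) * ∏ b ∈ S with a < b, (b - a) := by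
    intro a _
    rw [filter_insert]
    split_ifs
    · exact prod_insert (by simp [hc])
    · rw [one_mul]
  rw [vandermondeProd, prod_insert hc, filter_insert, if_neg (lt_irrefl c), prod_congr rfl hrow,
    prod_mul_distrib, prod_ite, prod_const_one, mul_one, vandermondeProd]
  ring

theorem vandermondeProd_insert_of_forall_lt {S : Finset ℕ} {c : ℕ} (h : ∀ b ∈ S, b < c) :
    vandermondeProd (insert c S) = vandermondeProd S * ∏ b ∈ S, (c - b) := by
  rw [vandermondeProd_insert fun hc => lt_irrefl c (h c hc), filter_true_of_mem h,
    filter_false_of_mem fun b hb => (h b hb).not_gt, prod_empty, mul_one]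

theorem vandermondeProd_insert_of_forall_gt {S : Finset ℕ} {c : ℕ} (h : ∀ b ∈ S, c < b) :
    vandermondeProd (insert c S) = vandermondeProd S * ∏ b ∈ S, (b - c) := by
  rw [vandermondeProd_insert fun hc => lt_irrefl c (h c hc), filter_true_of_mem h,
    filter_false_of_mem fun b hb => (h b hb).not_gt, prod_empty, mul_one]

theorem vandermondeProd_image {f : ℕ → ℕ} (hf : StrictMono f) (S : Finset ℕ) :
    vandermondeProd (S.image f) = ∏ a ∈ S, ∏ b ∈ S with a < b, (f b - f a) := by
  rw [vandermondeProd, prod_image hf.injective.injOn]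
  refine prod_congr rfl fun a _ => ?_
  simp only [filter_image, prod_image hf.injective.injOn, hf.lt_iff_lt]

theorem vandermondeProd_image_add_right (S : Finset ℕ) (c : ℕ) :
    vandermondeProd (S.image (· + c)) = vandermondeProd S := by
  rw [vandermondeProd_image fun a b h => Nat.add_lt_add_right h c]
  simp only [Nat.add_sub_add_right, vandermondeProd]

theorem vandermondeProd_range_mul_factorial (m : ℕ) :
    vandermondeProd (range m) * m ! = sf m := by
  induction m with
  | zero => rfl
  | succ m ih =>
    have hdesc : ∏ b ∈ range m, (m - b) = m ! := by
      rw [← descFactorial_eq_prod_range, descFactorial_self]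
    rw [range_add_one, vandermondeProd_insert_of_forall_lt fun b hb => mem_range.1 hb, hdesc, ih,
      superFactorial_succ]
    ring

theorem image_add_one_range (m : ℕ) : (range m).image (· + 1) = Icc 1 m := by
  rw [range_eq_Ico, image_add_right_Ico, zero_add, Ico_add_one_right_eq_Icc]

theorem prod_Icc_add_eq_factorial_mul_choose (x m : ℕ) :
    ∏ j ∈ Icc 1 m, (j + x) = m ! * (x + m).choose m := by
  rw [← image_add_one_range, prod_image (add_left_injective 1).injOn,
    ← ascFactorial_eq_factorial_mul_choose, ascFactorial_eq_prod_range]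
  exact prod_congr rfl fun i _ => by ring

theorem prod_Icc_sub_eq_factorial_mul_choose (x m : ℕ) :
    ∏ j ∈ Icc 1 m, (x + m + 1 - j) = m ! * (x + m).choose m := by
  rw [← image_add_one_range, prod_image (add_left_injective 1).injOn,
    ← descFactorial_eq_factorial_mul_choose, descFactorial_eq_prod_range]
  exact prod_congr rfl fun i _ => by omega

theorem vandermondeProd_Icc_one_mul_factorial (m : ℕ) :
    vandermondeProd (Icc 1 m) * m ! = sf m := by
  rw [← image_add_one_range, vandermondeProd_image_add_right, vandermondeProd_range_mul_factorial]

theorem vandermondeProd_Icc_erase_mul {k ℓ : ℕ} (hk1 : 1 ≤ k) (hkℓ : k ≤ ℓ) :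
    vandermondeProd ((Icc 1 ℓ).erase k) * ((k - 1)! * (ℓ - k)!) = vandermondeProd (Icc 1 ℓ) := by
  obtain ⟨a, rfl⟩ : ∃ a, k = a + 1 := ⟨k - 1, by omega⟩
  obtain ⟨b, rfl⟩ : ∃ b, ℓ = a + 1 + b := ⟨ℓ - (a + 1), by omega⟩
  have hbelow : ((Icc 1 (a + 1 + b)).erase (a + 1)).filter (· < a + 1) = Icc 1 a := by
    ext; simp only [mem_filter, mem_erase, mem_Icc]; omega
  have habove : ((Icc 1 (a + 1 + b)).erase (a + 1)).filter (a + 1 < ·) =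
      (Icc 1 b).image (· + (a + 1)) := by
    rw [image_add_right_Icc]; ext; simp only [mem_filter, mem_erase, mem_Icc]; omega
  have hfa : ∏ j ∈ Icc 1 a, (a + 1 - j) = a ! := by
    simpa using prod_Icc_sub_eq_factorial_mul_choose 0 a
  have hfb : ∏ j ∈ Icc 1 b, j = b ! := by
    simpa using prod_Icc_add_eq_factorial_mul_choose 0 b
  conv_rhs => rw [← insert_erase (mem_Icc.2 ⟨hk1, hkℓ⟩)]
  rw [vandermondeProd_insert (notMem_erase _ _), hbelow, habove,
    prod_image (add_left_injective _).injOn]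
  simp only [Nat.add_sub_cancel, hfa, hfb, Nat.add_sub_cancel_left]
  ring

def weylPoint (n : ℕ → ℕ) (j : ℕ) : ℕ := ∑ i ∈ Ioc 0 j, (n i + 1)

def weylPoints (n : ℕ → ℕ) (ℓ : ℕ) : Finset ℕ := (range (ℓ + 1)).image (weylPoint n)

theorem strictMono_weylPoint (n : ℕ → ℕ) : StrictMono (weylPoint n) :=
  strictMono_nat_of_lt_succ fun j => by
    rw [weylPoint, weylPoint, sum_Ioc_succ_top (Nat.zero_le j)]
    omega

theorem weylPoint_sub_weylPoint (n : ℕ → ℕ) {i j : ℕ} (hij : i ≤ j) :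
    weylPoint n j - weylPoint n i = ∑ t ∈ Ioc i j, (n t + 1) := by
  rw [weylPoint, weylPoint, ← sum_Ioc_consecutive _ (Nat.zero_le i) hij, Nat.add_sub_cancel_left]

theorem weylProduct_eq_vandermondeProd_weylPoints (n : ℕ → ℕ) (ℓ : ℕ) :
    ∏ p ∈ (Icc 1 ℓ ×ˢ Icc 1 ℓ).filter (fun p => p.1 ≤ p.2),
        ((p.2 : ℚ) - p.1 + 1 + ∑ i ∈ Icc p.1 p.2, (n i : ℚ))
      = vandermondeProd (weylPoints n ℓ) := by
  rw [weylPoints, vandermondeProd_image (strictMono_weylPoint n), ← prod_finset_product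
    ((range (ℓ + 1) ×ˢ range (ℓ + 1)).filter (fun q => q.1 < q.2)) _ _ (by simp [and_assoc])
    (f := fun q => weylPoint n q.2 - weylPoint n q.1), Nat.cast_prod]
  refine prod_nbij' (fun p => (p.1 - 1, p.2)) (fun q => (q.1 + 1, q.2)) ?_ ?_ ?_ ?_ ?_
  · intro p hp
    simp only [mem_filter, mem_product, mem_Icc, mem_range] at hp ⊢
    omega
  · intro q hq
    simp only [mem_filter, mem_product, mem_Icc, mem_range] at hq ⊢
    omega
  · intro p hp
    simp only [mem_filter, mem_product, mem_Icc] at hp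
    ext <;> simp only; omega
  · intro q hq
    simp
  · intro p hp
    simp only [mem_filter, mem_product, mem_Icc] at hp
    have hIcc : Icc p.1 p.2 = Ioc (p.1 - 1) p.2 := by ext; simp only [mem_Icc, mem_Ioc]; omega
    rw [weylPoint_sub_weylPoint n (by omega), ← hIcc]
    push_cast [sum_add_distrib, sum_const, nsmul_eq_mul, Nat.card_Icc,
      Nat.cast_sub (by omega : p.1 ≤ p.2 + 1)]
    ring

def highestWeight (ℓ k n₁ nℓ : ℕ) (i : ℕ) : ℕ :=
  (if i = 1 then n₁ else 0) + (if i = ℓ then nℓ else 0) + (if i = k then 1 else 0)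

theorem weylPoint_highestWeight {ℓ k n₁ nℓ : ℕ} (hk : 1 ≤ k) (hℓ : 1 ≤ ℓ) (j : ℕ) :
    weylPoint (highestWeight ℓ k n₁ nℓ) j =
      j + (if 1 ≤ j then n₁ else 0) + (if ℓ ≤ j then nℓ else 0) + (if k ≤ j then 1 else 0) := by
  simp only [weylPoint, highestWeight, sum_add_distrib, sum_ite_eq', mem_Ioc, sum_const,
    Nat.card_Ioc, Nat.sub_zero, smul_eq_mul, mul_one]
  split_ifs <;> omega

theorem weylPoints_highestWeight {ℓ k n₁ nℓ : ℕ} (hk1 : 1 ≤ k) (hkℓ : k ≤ ℓ) :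
    weylPoints (highestWeight ℓ k n₁ nℓ) ℓ =
      insert 0 (insert (n₁ + nℓ + ℓ + 1) (((Icc 1 ℓ).erase k).image (· + n₁))) := by
  ext t
  simp only [weylPoints, mem_image, mem_range, mem_insert, mem_erase, mem_Icc]
  constructor
  · rintro ⟨j, hj, rfl⟩
    rw [weylPoint_highestWeight hk1 (hk1.trans hkℓ)]
    by_cases hj0 : j = 0
    · left; split_ifs <;> omega
    by_cases hjℓ : j = ℓ
    · right; left; split_ifs <;> omega
    right; right
    refine ⟨j + if k ≤ j then 1 else 0, ?_⟩
    split_ifs <;> omega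
  · rintro (rfl | rfl | ⟨u, ⟨hu, h1, h2⟩, rfl⟩)
    · refine ⟨0, by omega, ?_⟩
      rw [weylPoint_highestWeight hk1 (hk1.trans hkℓ)]
      split_ifs <;> omega
    · refine ⟨ℓ, by omega, ?_⟩
      rw [weylPoint_highestWeight hk1 (hk1.trans hkℓ)]
      split_ifs <;> omega
    · refine ⟨if u < k then u else u - 1, by split_ifs <;> omega, ?_⟩
      rw [weylPoint_highestWeight hk1 (hk1.trans hkℓ)]
      split_ifs <;> omega

theorem vandermondeProd_weylPoints_highestWeight_mul {ℓ k n₁ nℓ : ℕ} (hk1 : 1 ≤ k)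
    (hkℓ : k ≤ ℓ) :
    vandermondeProd (weylPoints (highestWeight ℓ k n₁ nℓ) ℓ)
        * ((n₁ + k) * (nℓ + ℓ + 1 - k) * ((k - 1)! * (ℓ - k)!))
      = (n₁ + nℓ + ℓ + 1) * (ℓ ! * (n₁ + ℓ).choose ℓ) * (ℓ ! * (nℓ + ℓ).choose ℓ)
        * vandermondeProd (Icc 1 ℓ) := by
  have hk : k ∈ Icc 1 ℓ := mem_Icc.2 ⟨hk1, hkℓ⟩
  have hlow : (∏ j ∈ (Icc 1 ℓ).erase k, (j + n₁)) * (n₁ + k) = ℓ ! * (n₁ + ℓ).choose ℓ := by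
    rw [add_comm n₁ k, prod_erase_mul _ _ hk, prod_Icc_add_eq_factorial_mul_choose]
  have hhigh : (∏ j ∈ (Icc 1 ℓ).erase k, (n₁ + nℓ + ℓ + 1 - (j + n₁))) * (nℓ + ℓ + 1 - k) =
      ℓ ! * (nℓ + ℓ).choose ℓ := by
    rw [← prod_Icc_sub_eq_factorial_mul_choose, ← prod_erase_mul _ _ hk]
    congr 1
    exact prod_congr rfl fun j _ => by omega
  rw [weylPoints_highestWeight hk1 hkℓ, vandermondeProd_insert_of_forall_gt (by simp; omega),
    vandermondeProd_insert_of_forall_lt (by simp; omega), vandermondeProd_image_add_right,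
    prod_insert (by simp; omega), prod_image (add_left_injective _).injOn,
    prod_image (add_left_injective _).injOn, ← vandermondeProd_Icc_erase_mul hk1 hkℓ, ← hlow,
    ← hhigh]
  simp only [Nat.sub_zero]
  ring

theorem vandermondeProd_weylPoints_highestWeight {ℓ k n₁ nℓ : ℕ} (hk1 : 1 ≤ k) (hkℓ : k ≤ ℓ) :
    vandermondeProd (weylPoints (highestWeight ℓ k n₁ nℓ) ℓ) * ((n₁ + k) * (nℓ + ℓ + 1 - k))
      = k * (n₁ + nℓ + ℓ + 1) * (n₁ + ℓ).choose ℓ * (nℓ + ℓ).choose ℓ * ℓ.choose k * sf ℓ := by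
  apply Nat.eq_of_mul_eq_mul_right (by positivity : 0 < (k - 1)! * (ℓ - k)!)
  rw [mul_assoc, vandermondeProd_weylPoints_highestWeight_mul hk1 hkℓ,
    ← vandermondeProd_Icc_one_mul_factorial, ← Nat.choose_mul_factorial_mul_factorial hkℓ,
    ← Nat.mul_factorial_pred (by omega : k ≠ 0)]
  ring

theorem weyl_dim_formula_general (ℓ k n₁ nℓ : ℕ) (hk1 : 1 ≤ k) (hkℓ : k ≤ ℓ) :
    (∏ p ∈ (Finset.Icc 1 ℓ ×ˢ Finset.Icc 1 ℓ).filter (fun p => p.1 ≤ p.2),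
        ((p.2 : ℚ) - (p.1 : ℚ) + 1 + ∑ i ∈ Finset.Icc p.1 p.2,
          ((if i = 1 then (n₁ : ℚ) else 0) + (if i = ℓ then (nℓ : ℚ) else 0)
            + (if i = k then 1 else 0))))
      / (∏ r ∈ Finset.Icc 1 ℓ, (Nat.factorial r : ℚ))
    = ((k : ℚ) * ((n₁ : ℚ) + (nℓ : ℚ) + (ℓ : ℚ) + 1))
        / (((n₁ : ℚ) + (k : ℚ)) * ((nℓ : ℚ) + (ℓ : ℚ) + 1 - (k : ℚ)))
      * (Nat.choose (n₁ + ℓ) ℓ : ℚ) * (Nat.choose (nℓ + ℓ) ℓ : ℚ)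
      * (Nat.choose ℓ k : ℚ) := by
  have hweight : ∀ i, (if i = 1 then (n₁ : ℚ) else 0) + (if i = ℓ then (nℓ : ℚ) else 0)
      + (if i = k then 1 else 0) = (highestWeight ℓ k n₁ nℓ i : ℚ) := by
    intro i; simp only [highestWeight]; push_cast; rfl
  simp only [hweight]
  rw [weylProduct_eq_vandermondeProd_weylPoints, ← Nat.cast_prod, prod_Icc_factorial]
  have key := congrArg (Nat.cast : ℕ → ℚ)
    (vandermondeProd_weylPoints_highestWeight (n₁ := n₁) (nℓ := nℓ) hk1 hkℓ)
  push_cast [Nat.cast_sub (by omega : k ≤ nℓ + ℓ + 1)] at key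
  have hS : (sf ℓ : ℚ) ≠ 0 := by rw [← prod_Icc_factorial]; positivity
  have hA : (n₁ + k : ℚ) ≠ 0 := by norm_cast; omega
  have hB : (nℓ + ℓ + 1 - k : ℚ) ≠ 0 := by
    have : (k : ℚ) ≤ ℓ := by exact_mod_cast hkℓ
    exact ne_of_gt (by linarith [(Nat.cast_nonneg nℓ : (0 : ℚ) ≤ nℓ)])
  field_simp
  linear_combination key

theorem weyl_dim_formula (ℓ k n₁ nℓ : ℕ) (hℓ : 2 ≤ ℓ) (hk1 : 1 ≤ k) (hkℓ : k ≤ ℓ) :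
    (∏ p ∈ (Finset.Icc 1 ℓ ×ˢ Finset.Icc 1 ℓ).filter (fun p => p.1 ≤ p.2),
        ((p.2 : ℚ) - (p.1 : ℚ) + 1 + ∑ i ∈ Finset.Icc p.1 p.2,
          ((if i = 1 then (n₁ : ℚ) else 0) + (if i = ℓ then (nℓ : ℚ) else 0)
            + (if i = k then 1 else 0))))
      / (∏ r ∈ Finset.Icc 1 ℓ, (Nat.factorial r : ℚ))
    = ((k : ℚ) * ((n₁ : ℚ) + (nℓ : ℚ) + (ℓ : ℚ) + 1))
        / (((n₁ : ℚ) + (k : ℚ)) * ((nℓ : ℚ) + (ℓ : ℚ) + 1 - (k : ℚ)))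
      * (Nat.choose (n₁ + ℓ) ℓ : ℚ) * (Nat.choose (nℓ + ℓ) ℓ : ℚ)
      * (Nat.choose ℓ k : ℚ) :=
  weyl_dim_formula_general ℓ k n₁ nℓ hk1 hkℓ
end

section
/- With k ∈ {1,…,ℓ}, n₁, n_ℓ ∈ ℕ, N := n₁ − n_ℓ + k, the q-Casimir eigenvalue satisfies the identity 2λ = [n₁+k]·[n₁ − 2N/(ℓ+1) + ℓ+2−k] + [n_ℓ]·[n_ℓ + 2N/(ℓ+1) + ℓ] + [ℓ+1]·[N/(ℓ+1)]², where 2λ := Σ_{i=1}^{ℓ+1} [ (Σ_{j=1}^{i−1} j n_j − Σ_{j=i}^{ℓ} (ℓ+1−j) n_j)/(ℓ+1) + i − (ℓ+2)/2 ]² + 2(ℓ+1 − [ℓ+1])/(q−q^{−1})², with n_i = n₁δ_{i,1} + n_ℓδ_{i,ℓ} + δ_{i,k}. -/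
/-!
Since `[x]² = (q^{2x} + q^{-2x} - 2)/(q - q⁻¹)²` and `∑_{j<n} q^{2j-(n-1)} = [n]`, a string of `n`
consecutive points centred at `x` satisfies `∑_j [x - (n-1)/2 + j]² + 2(n - [n])/(q - q⁻¹)² = [n][x]²`;
this absorbs the constant term of `2λ`.

For the weight `n₁ϖ₁ + nℓϖ_ℓ + ϖ_k` the coordinates of `λ + ρ` are the string `m - ℓ/2, …, m + ℓ/2`,
`m = N/(ℓ+1)`, except that its entries `m - ℓ/2 + (k - 1)` and `m + ℓ/2` are replaced by
`m - ℓ/2 - n₁ - 1` and `m + ℓ/2 + nℓ`. The `q`-difference of squares `[x]² - [y]² = [x + y][x - y]`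
turns these two replacements into the first two products, and the string gives `[ℓ+1][m]²`.
-/

/-- The q-number `[x] = (q^x - q^(-x))/(q - q⁻¹)` for real `x`. -/
noncomputable def qnR (q x : ℝ) : ℝ := (q ^ x - q ^ (-x)) / (q - q⁻¹)

open Finset

lemma qnR_neg (q x : ℝ) : qnR q (-x) = -qnR q x := by
  rw [qnR, qnR, neg_neg, ← neg_div, neg_sub]

lemma qnR_inv {q : ℝ} (hq : 0 < q) (x : ℝ) : qnR q⁻¹ x = qnR q x := by
  rw [qnR, qnR, Real.inv_rpow hq.le, Real.inv_rpow hq.le, inv_inv, Real.rpow_neg hq.le,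
    inv_inv, ← neg_div_neg_eq, neg_sub, neg_sub]

lemma qnR_sq {q : ℝ} (hq : 0 < q) (x : ℝ) :
    qnR q x ^ 2 = (q ^ (2 * x) + q⁻¹ ^ (2 * x) - 2) / (q - q⁻¹) ^ 2 := by
  have hx : 0 < q ^ x := Real.rpow_pos_of_pos hq x
  have h2x : q ^ (2 * x) = (q ^ x) ^ 2 := by rw [mul_comm, Real.rpow_mul hq.le, Real.rpow_two]
  rw [qnR, div_pow, Real.inv_rpow hq.le, Real.rpow_neg hq.le, h2x]
  field_simp
  ring

lemma qnR_sq_sub_qnR_sq {q : ℝ} (hq : 0 < q) (x y : ℝ) :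
    qnR q x ^ 2 - qnR q y ^ 2 = qnR q (x + y) * qnR q (x - y) := by
  have hx : 0 < q ^ x := Real.rpow_pos_of_pos hq x
  have hy : 0 < q ^ y := Real.rpow_pos_of_pos hq y
  simp only [qnR, Real.rpow_neg hq.le, Real.rpow_add hq, Real.rpow_sub hq, neg_add, neg_sub]
  field_simp
  ring

lemma sum_range_rpow_eq_mul_qnR {q : ℝ} (hq0 : 0 < q) (hq1 : q ≠ 1) (n : ℕ) (y : ℝ) :
    ∑ j ∈ range n, q ^ (y + (2 * j - (n - 1))) = q ^ y * qnR q n := by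
  have hq2 : q ^ 2 ≠ 1 := by
    rwa [Ne, pow_eq_one_iff_of_nonneg hq0.le two_ne_zero]
  have hterm : ∀ j : ℕ, q ^ (y + (2 * j - (n - 1))) = q ^ (y + 1 - n) * (q ^ 2) ^ j := by
    intro j
    rw [← pow_mul, ← Real.rpow_natCast, ← Real.rpow_add hq0]
    push_cast
    ring_nf
  simp only [hterm, ← mul_sum, geom_sum_eq hq2, qnR, Real.rpow_sub hq0, Real.rpow_add hq0,
    Real.rpow_neg hq0.le, Real.rpow_natCast, Real.rpow_one]
  have hqn : q ^ n ≠ 0 := pow_ne_zero _ hq0.ne'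
  field_simp
  ring

lemma sum_range_qnR_sq_centered {q : ℝ} (hq0 : 0 < q) (hq1 : q ≠ 1) (n : ℕ) (x : ℝ) :
    ∑ j ∈ range n, qnR q (x - (n - 1) / 2 + j) ^ 2 + 2 * (n - qnR q n) / (q - q⁻¹) ^ 2
      = qnR q n * qnR q x ^ 2 := by
  have hexp : ∀ j : ℕ, 2 * (x - (n - 1) / 2 + j) = 2 * x + (2 * j - (n - 1)) := fun j => by ring
  simp only [qnR_sq hq0, hexp, ← sum_div, sum_sub_distrib, sum_add_distrib,
    sum_range_rpow_eq_mul_qnR hq0 hq1, sum_range_rpow_eq_mul_qnR (inv_pos.2 hq0) (inv_ne_one.2 hq1),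
    qnR_inv hq0, sum_const, card_range, nsmul_eq_mul]
  ring

/-- The `i`-th coordinate of `λ + ρ` in the `ε`-basis of `𝔰𝔩(ℓ + 1)`, for `λ = ∑ⱼ n j • ϖⱼ`. -/
noncomputable def rhoShifted (ℓ : ℕ) (n : ℕ → ℝ) (i : ℕ) : ℝ :=
  ((∑ j ∈ Icc 1 (i - 1), (j : ℝ) * n j) - ∑ j ∈ Icc i ℓ, ((ℓ : ℝ) + 1 - (j : ℝ)) * n j)
    / ((ℓ : ℝ) + 1) + (i : ℝ) - ((ℓ : ℝ) + 2) / 2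

lemma rhoShifted_eq {ℓ i : ℕ} (n : ℕ → ℝ) (hi1 : 1 ≤ i) (hiℓ : i ≤ ℓ + 1) :
    rhoShifted ℓ n i
      = (∑ j ∈ Icc 1 ℓ, (j : ℝ) * n j) / (ℓ + 1) - ∑ j ∈ Icc i ℓ, n j + i - (ℓ + 2) / 2 := by
  have hsplit : ∑ j ∈ Icc 1 ℓ, (j : ℝ) * n j
      = ∑ j ∈ Icc 1 (i - 1), (j : ℝ) * n j + ∑ j ∈ Icc i ℓ, (j : ℝ) * n j := by
    rw [Icc_sub_one_right_eq_Ico_of_not_isMin (by simp; omega),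
      ← Ico_add_one_right_eq_Icc, ← Ico_add_one_right_eq_Icc, sum_Ico_consecutive _ hi1 hiℓ]
  simp only [rhoShifted, hsplit, sub_mul, sum_sub_distrib, ← mul_sum]
  field_simp
  ring

def weight (ℓ k : ℕ) (n₁ nℓ : ℝ) (i : ℕ) : ℝ :=
  (if i = 1 then n₁ else 0) + (if i = ℓ then nℓ else 0) + (if i = k then 1 else 0)

section weight

variable {ℓ k : ℕ} {n₁ nℓ : ℝ}

lemma sum_Icc_natCast_mul_weight (hk1 : 1 ≤ k) (hkℓ : k ≤ ℓ) :
    ∑ j ∈ Icc 1 ℓ, (j : ℝ) * weight ℓ k n₁ nℓ j = n₁ + ℓ * nℓ + k := by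
  simp [weight, mul_add, sum_add_distrib, hk1, hkℓ, hk1.trans hkℓ]

lemma sum_Icc_weight (i : ℕ) (hℓ : 1 ≤ ℓ) (hkℓ : k ≤ ℓ) :
    ∑ j ∈ Icc i ℓ, weight ℓ k n₁ nℓ j
      = (if i ≤ 1 then n₁ else 0) + (if i ≤ ℓ then nℓ else 0) + (if i ≤ k then 1 else 0) := by
  simp [weight, sum_add_distrib, hℓ, hkℓ]

lemma rhoShifted_weight (hk1 : 1 ≤ k) (hkℓ : k ≤ ℓ) {m : ℝ} (hm : m = (n₁ - nℓ + k) / (ℓ + 1))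
    {i : ℕ} (hi1 : 1 ≤ i) (hiℓ : i ≤ ℓ + 1) :
    rhoShifted ℓ (weight ℓ k n₁ nℓ) i = m - ℓ / 2 + (i - 1) + nℓ
      - ((if i ≤ 1 then n₁ else 0) + (if i ≤ ℓ then nℓ else 0) + (if i ≤ k then 1 else 0)) := by
  rw [hm, rhoShifted_eq _ hi1 hiℓ, sum_Icc_natCast_mul_weight hk1 hkℓ,
    sum_Icc_weight _ (hk1.trans hkℓ) hkℓ]
  field_simp
  ring

lemma sum_Icc_comp_rhoShifted_weight (f : ℝ → ℝ) (hk1 : 1 ≤ k) (hkℓ : k ≤ ℓ) {m : ℝ}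
    (hm : m = (n₁ - nℓ + k) / (ℓ + 1)) :
    ∑ i ∈ Icc 1 (ℓ + 1), f (rhoShifted ℓ (weight ℓ k n₁ nℓ) i)
      = f (m - ℓ / 2 - n₁ - 1) + f (m + ℓ / 2 + nℓ) + ∑ j ∈ range (ℓ + 1), f (m - ℓ / 2 + j)
        - f (m - ℓ / 2 + (k - 1)) - f (m + ℓ / 2) := by
  have ha := fun {i} => rhoShifted_weight (i := i) hk1 hkℓ hm
  set a := rhoShifted ℓ (weight ℓ k n₁ nℓ)
  obtain ⟨r, rfl⟩ := Nat.exists_eq_add_of_le hkℓ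
  obtain ⟨k, rfl⟩ := Nat.exists_eq_add_of_le' hk1
  have hfirst : a (1 + 0) = m - (k + 1 + r : ℕ) / 2 - n₁ - 1 := by
    rw [ha le_rfl (by omega), if_pos le_rfl, if_pos (by omega), if_pos (by omega)]
    push_cast
    ring
  have hlow : ∀ j ∈ range k, a (1 + (j + 1)) = m - (k + 1 + r : ℕ) / 2 + j := by
    intro j hj
    rw [mem_range] at hj
    rw [ha (by omega) (by omega), if_neg (by omega), if_pos (by omega), if_pos (by omega)]
    push_cast
    ring
  have hhigh : ∀ j ∈ range r, a (1 + (k + 1 + j)) = m - (k + 1 + r : ℕ) / 2 + (k + 1 + j : ℕ) := by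
    intro j hj
    rw [mem_range] at hj
    rw [ha (by omega) (by omega), if_neg (by omega), if_pos (by omega), if_neg (by omega)]
    push_cast
    ring
  have hlast : a (1 + (k + 1 + r)) = m + (k + 1 + r : ℕ) / 2 + nℓ := by
    rw [ha (by omega) (by omega), if_neg (by omega), if_neg (by omega), if_neg (by omega)]
    push_cast
    ring
  rw [← Ico_add_one_right_eq_Icc, sum_Ico_eq_sum_range, Nat.add_sub_cancel, sum_range_succ,
    sum_range_add, sum_range_succ', hfirst, sum_congr rfl fun j hj => congrArg f (hlow j hj),
    sum_congr rfl fun j hj => congrArg f (hhigh j hj), hlast,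
    sum_range_succ, sum_range_add, sum_range_succ]
  push_cast
  ring_nf

end weight

noncomputable def twiceCasimirEigenvalue (q : ℝ) (ℓ : ℕ) (n : ℕ → ℝ) : ℝ :=
  ∑ i ∈ Icc 1 (ℓ + 1), qnR q (rhoShifted ℓ n i) ^ 2
    + 2 * ((ℓ : ℝ) + 1 - qnR q ((ℓ : ℝ) + 1)) / (q - q⁻¹) ^ 2

theorem casimir_eigenvalue_identity_general (q : ℝ) (hq0 : 0 < q) (hq1 : q < 1)
    (ℓ k n₁ nℓ : ℕ) (hk1 : 1 ≤ k) (hkℓ : k ≤ ℓ) :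
    -- weight components n_i = n₁ δ_{i,1} + nℓ δ_{i,ℓ} + δ_{i,k}
    (fun (nn : ℕ → ℝ) (N : ℝ) =>
      (∑ i ∈ Finset.Icc 1 (ℓ + 1),
          qnR q (((∑ j ∈ Finset.Icc 1 (i - 1), (j : ℝ) * nn j)
              - ∑ j ∈ Finset.Icc i ℓ, ((ℓ : ℝ) + 1 - (j : ℝ)) * nn j) / ((ℓ : ℝ) + 1)
              + (i : ℝ) - ((ℓ : ℝ) + 2) / 2) ^ 2)
        + 2 * ((ℓ : ℝ) + 1 - qnR q ((ℓ : ℝ) + 1)) / (q - q⁻¹) ^ 2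
      = qnR q ((n₁ : ℝ) + (k : ℝ))
          * qnR q ((n₁ : ℝ) - 2 * N / ((ℓ : ℝ) + 1) + (ℓ : ℝ) + 2 - (k : ℝ))
        + qnR q (nℓ : ℝ) * qnR q ((nℓ : ℝ) + 2 * N / ((ℓ : ℝ) + 1) + (ℓ : ℝ))
        + qnR q ((ℓ : ℝ) + 1) * qnR q (N / ((ℓ : ℝ) + 1)) ^ 2)
      (fun i => (if i = 1 then (n₁ : ℝ) else 0) + (if i = ℓ then (nℓ : ℝ) else 0)
        + (if i = k then 1 else 0))
      ((n₁ : ℝ) - (nℓ : ℝ) + (k : ℝ)) := by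
  show twiceCasimirEigenvalue q ℓ (weight ℓ k n₁ nℓ) = _
  set m : ℝ := (n₁ - nℓ + k) / (ℓ + 1) with hm
  have hstring := sum_range_qnR_sq_centered hq0 hq1.ne (ℓ + 1) m
  simp only [Nat.cast_add, Nat.cast_one, add_sub_cancel_right] at hstring
  have hbottom : qnR q (m - ℓ / 2 - n₁ - 1) ^ 2 - qnR q (m - ℓ / 2 + (k - 1)) ^ 2
      = qnR q (n₁ + k) * qnR q (n₁ - 2 * (n₁ - nℓ + k) / (ℓ + 1) + ℓ + 2 - k) := by
    rw [qnR_sq_sub_qnR_sq hq0, ← neg_mul_neg, ← qnR_neg, ← qnR_neg, mul_comm]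
    congr 2 <;> ring
  have htop : qnR q (m + ℓ / 2 + nℓ) ^ 2 - qnR q (m + ℓ / 2) ^ 2
      = qnR q nℓ * qnR q (nℓ + 2 * (n₁ - nℓ + k) / (ℓ + 1) + ℓ) := by
    rw [qnR_sq_sub_qnR_sq hq0, mul_comm]
    congr 2 <;> ring
  rw [twiceCasimirEigenvalue, sum_Icc_comp_rhoShifted_weight (fun x => qnR q x ^ 2) hk1 hkℓ hm]
  linear_combination hstring + hbottom + htop

theorem casimir_eigenvalue_identity (q : ℝ) (hq0 : 0 < q) (hq1 : q < 1)
    (ℓ k n₁ nℓ : ℕ) (hℓ : 2 ≤ ℓ) (hk1 : 1 ≤ k) (hkℓ : k ≤ ℓ) :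
    -- weight components n_i = n₁ δ_{i,1} + nℓ δ_{i,ℓ} + δ_{i,k}
    (fun (nn : ℕ → ℝ) (N : ℝ) =>
      (∑ i ∈ Finset.Icc 1 (ℓ + 1),
          qnR q (((∑ j ∈ Finset.Icc 1 (i - 1), (j : ℝ) * nn j)
              - ∑ j ∈ Finset.Icc i ℓ, ((ℓ : ℝ) + 1 - (j : ℝ)) * nn j) / ((ℓ : ℝ) + 1)
              + (i : ℝ) - ((ℓ : ℝ) + 2) / 2) ^ 2)
        + 2 * ((ℓ : ℝ) + 1 - qnR q ((ℓ : ℝ) + 1)) / (q - q⁻¹) ^ 2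
      = qnR q ((n₁ : ℝ) + (k : ℝ))
          * qnR q ((n₁ : ℝ) - 2 * N / ((ℓ : ℝ) + 1) + (ℓ : ℝ) + 2 - (k : ℝ))
        + qnR q (nℓ : ℝ) * qnR q ((nℓ : ℝ) + 2 * N / ((ℓ : ℝ) + 1) + (ℓ : ℝ))
        + qnR q ((ℓ : ℝ) + 1) * qnR q (N / ((ℓ : ℝ) + 1)) ^ 2)
      (fun i => (if i = 1 then (n₁ : ℝ) else 0) + (if i = ℓ then (nℓ : ℝ) else 0)
        + (if i = k then 1 else 0))
      ((n₁ : ℝ) - (nℓ : ℝ) + (k : ℝ)) :=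
  casimir_eigenvalue_identity_general q hq0 hq1 ℓ k n₁ nℓ hk1 hkℓ
end
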